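/- Let (A,A') be a Fredholm extension pair of regular operators on a complex Hilbert space H, and let L be a closed subspace of β such that (L, C) is a Fredholm pair of subspaces of β. Then the realization A_L is a Fredholm operator and its index satisfies ind A_L = ind_β(L, C) + dim ker A − dim(H/ran A') ∈ ℤ, where ind A_L = dim ker A_L − dim(H/ran A_L) and ind_β(L,C) = dim(L ∩ C) − dim(β/(L + C)). -/

import Mathlib

noncomputable section

variable {H : Type*} [NormedAddCommGroup H] [InnerProductSpace ℂ H] [CompleteSpace H]

open Classical in
noncomputable def orthProj {W : Type*} [NormedAddCommGroup W] [InnerProductSpace ℂ W]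
    (M : Submodule ℂ W) : W →L[ℂ] W :=
  if h : IsComplete (M : Set W) then
    haveI : CompleteSpace M := h.completeSpace_coe
    M.subtypeL.comp (M.orthogonalProjectionOnto)
  else 0

/-- The graph of a partially defined operator, as a subspace of the Hilbert space
`WithLp 2 (H × H)` (i.e. `H ⊕ H` with the Hilbert direct-sum structure). -/
def graphW (A : H →ₗ.[ℂ] H) : Submodule ℂ (WithLp 2 (H × H)) :=
  A.graph.map ((WithLp.linearEquiv 2 ℂ (H × H)).symm : (H × H) →ₗ[ℂ] WithLp 2 (H × H))

/-- The space of abstract boundary values `β = Γ_{A'} ∩ Γ_A^⊥` of an extension pair. -/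
def bdryW (A A' : H →ₗ.[ℂ] H) : Submodule ℂ (WithLp 2 (H × H)) :=
  graphW A' ⊓ (graphW A)ᗮ

/-- The subspace `ker A' × {0} = Γ_{A'} ∩ (H × {0})` of `H ⊕ H`. -/
def kerW (A' : H →ₗ.[ℂ] H) : Submodule ℂ (WithLp 2 (H × H)) :=
  graphW A' ⊓ (((⊤ : Submodule ℂ H).prod (⊥ : Submodule ℂ H)).map
    ((WithLp.linearEquiv 2 ℂ (H × H)).symm : (H × H) →ₗ[ℂ] WithLp 2 (H × H)))

/-- The Cauchy data space `C = γ(ker A' × {0}) ⊆ β`. -/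
def cauchyW (A A' : H →ₗ.[ℂ] H) : Submodule ℂ (WithLp 2 (H × H)) :=
  (kerW A').map ((orthProj (bdryW A A')) : WithLp 2 (H × H) →ₗ[ℂ] WithLp 2 (H × H))

/-- The domain `{x : (x, A'x) ∈ L + Γ_A}` of the realization. -/
def realizationDom (A : H →ₗ.[ℂ] H) (L : Submodule ℂ (WithLp 2 (H × H))) : Submodule ℂ H :=
  (L ⊔ graphW A).map
    ((LinearMap.fst ℂ H H).comp ((WithLp.linearEquiv 2 ℂ (H × H)) : WithLp 2 (H × H) →ₗ[ℂ] H × H))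

/-- The realization `A_L`: the restriction of `A'` to `{x ∈ dom A' : (x, A'x) ∈ L + Γ_A}`. -/
def realization (A A' : H →ₗ.[ℂ] H) (L : Submodule ℂ (WithLp 2 (H × H))) : H →ₗ.[ℂ] H :=
  A'.domRestrict (realizationDom A L)

def FredholmOp (B : H →ₗ.[ℂ] H) : Prop :=
  IsClosed ((LinearMap.range B.toFun : Submodule ℂ H) : Set H) ∧
  FiniteDimensional ℂ (LinearMap.ker B.toFun) ∧
  FiniteDimensional ℂ (H ⧸ LinearMap.range B.toFun)

def LowerSemiFredholmOp (B : H →ₗ.[ℂ] H) : Prop :=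
  IsClosed ((LinearMap.range B.toFun : Submodule ℂ H) : Set H) ∧
  FiniteDimensional ℂ (LinearMap.ker B.toFun)

def UpperSemiFredholmOp (B : H →ₗ.[ℂ] H) : Prop :=
  IsClosed ((LinearMap.range B.toFun : Submodule ℂ H) : Set H) ∧
  FiniteDimensional ℂ (H ⧸ LinearMap.range B.toFun)

/-- `(L, N)` is a Fredholm pair of subspaces of the subspace `β`. -/
def FredholmPairIn {W : Type*} [NormedAddCommGroup W] [InnerProductSpace ℂ W]
    (β L N : Submodule ℂ W) : Prop :=
  IsClosed ((L ⊔ N : Submodule ℂ W) : Set W) ∧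
  FiniteDimensional ℂ ↥(L ⊓ N) ∧
  FiniteDimensional ℂ (↥β ⧸ Submodule.comap β.subtype (L ⊔ N))

/-- `(L, N)` is a transversal pair of subspaces of the subspace `β`. -/
def TransversalPairIn {W : Type*} [NormedAddCommGroup W] [InnerProductSpace ℂ W]
    (β L N : Submodule ℂ W) : Prop :=
  L ⊓ N = ⊥ ∧ L ⊔ N = β

section Aux
variable {W : Type*} [NormedAddCommGroup W] [InnerProductSpace ℂ W]
  {M N : Submodule ℂ W} {x : W}

theorem orthProj_mem (hM : IsComplete (M : Set W)) (x : W) : orthProj M x ∈ M := by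
  haveI : CompleteSpace M := hM.completeSpace_coe
  simp only [orthProj, dif_pos hM]
  exact SetLike.coe_mem _

theorem orthProj_of_mem (hM : IsComplete (M : Set W)) (hx : x ∈ M) : orthProj M x = x := by
  haveI : CompleteSpace M := hM.completeSpace_coe
  simp only [orthProj, dif_pos hM]
  show ((M.orthogonalProjectionOnto x : M) : W) = x
  rw [show x = ((⟨x, hx⟩ : M) : W) from rfl, Submodule.orthogonalProjectionOnto_mem_subspace_eq_self]

theorem orthProj_of_mem_orth (hM : IsComplete (M : Set W)) (hx : x ∈ Mᗮ) :
    orthProj M x = 0 := by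
  haveI : CompleteSpace M := hM.completeSpace_coe
  simp only [orthProj, dif_pos hM]
  show ((M.orthogonalProjectionOnto x : M) : W) = 0
  rw [Submodule.orthogonalProjectionOnto_apply_of_mem_orthogonal hx]
  rfl

theorem sub_orthProj_mem_orth (hM : IsComplete (M : Set W)) (x : W) :
    x - orthProj M x ∈ Mᗮ := by
  haveI : CompleteSpace M := hM.completeSpace_coe
  simp only [orthProj, dif_pos hM]
  exact Submodule.sub_starProjection_mem_orthogonal x

theorem orthProj_add_eq (hM : IsComplete (M : Set W)) (hx : x ∈ M) {y : W} (hy : y ∈ Mᗮ) :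
    orthProj M (x + y) = x := by
  rw [map_add, orthProj_of_mem hM hx, orthProj_of_mem_orth hM hy, add_zero]

theorem mem_sup_orth (hM : IsComplete (M : Set W)) (hNM : N ≤ Mᗮ) :
    x ∈ M ⊔ N ↔ x - orthProj M x ∈ N := by
  constructor
  · rintro h
    obtain ⟨m, hm, n, hn, rfl⟩ := Submodule.mem_sup.mp h
    rw [orthProj_add_eq hM hm (hNM hn)]
    simpa using hn
  · intro h
    exact Submodule.mem_sup.mpr ⟨orthProj M x, orthProj_mem hM x, x - orthProj M x, h, by abel⟩

theorem isClosed_sup_orth [CompleteSpace W] (hM : IsClosed (M : Set W))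
    (hN : IsClosed (N : Set W)) (hNM : N ≤ Mᗮ) :
    IsClosed ((M ⊔ N : Submodule ℂ W) : Set W) := by
  have hMc : IsComplete (M : Set W) := hM.isComplete
  have : ((M ⊔ N : Submodule ℂ W) : Set W) = (fun x => x - orthProj M x) ⁻¹' N :=
    Set.ext fun x => mem_sup_orth hMc hNM
  rw [this]
  exact hN.preimage (continuous_id.sub (orthProj M).continuous)

theorem fd_of_submodule_quotient {V : Type*} [AddCommGroup V] [Module ℂ V] (S : Submodule ℂ V)
    (h1 : FiniteDimensional ℂ S) (h2 : FiniteDimensional ℂ (V ⧸ S)) : FiniteDimensional ℂ V := by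
  have := (isNoetherian_iff_submodule_quotient S).mpr
    ⟨IsNoetherian.iff_fg.2 ‹_›, IsNoetherian.iff_fg.2 ‹_›⟩
  exact IsNoetherian.iff_fg.1 this

end Aux

section Core
variable {W : Type*} [NormedAddCommGroup W] [InnerProductSpace ℂ W] [CompleteSpace W]
variable {Γ ΓA β L K C : Submodule ℂ W}

variable (hΓcl : IsClosed (Γ : Set W)) (hΓAcl : IsClosed (ΓA : Set W))
  (hΓAΓ : ΓA ≤ Γ) (hβ : β = Γ ⊓ ΓAᗮ) (hKΓ : K ≤ Γ)
  (hC : C = K.map (orthProj β : W →ₗ[ℂ] W)) (hL : L ≤ β)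

section
include hΓcl hΓAcl hΓAΓ hβ hKΓ hC hL

theorem core_facts :
    -- (1) ∀ w ∈ Γ, orthProj β w ∈ β ∧ w - orthProj β w ∈ ΓA
    (∀ w ∈ Γ, orthProj β w ∈ β ∧ w - orthProj β w ∈ ΓA) ∧
    -- (2) D equality
    (ΓA ⊔ (L ⊔ C) = (L ⊔ ΓA) ⊔ K) ∧
    -- (3) L ⊔ C ≤ β ∧ ΓA ≤ βᗮ
    (L ⊔ C ≤ β) ∧ (ΓA ≤ βᗮ) := by
  have hΓAc : IsComplete (ΓA : Set W) := hΓAcl.isComplete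
  have hβcl : IsClosed (β : Set W) := by
    rw [hβ]; exact hΓcl.inter ΓA.isClosed_orthogonal
  have hβc : IsComplete (β : Set W) := hβcl.isComplete
  have hβorthA : β ≤ ΓAᗮ := hβ ▸ inf_le_right
  have hβΓ : β ≤ Γ := hβ ▸ inf_le_left
  have hAorthβ : ΓA ≤ βᗮ :=
    le_trans ΓA.le_orthogonal_orthogonal (Submodule.orthogonal_le hβorthA)
  have hCβ : C ≤ β := by
    rw [hC]
    rintro c ⟨k, hk, rfl⟩
    exact orthProj_mem hβc k
  have hproj : ∀ w ∈ Γ, orthProj β w ∈ β ∧ w - orthProj β w ∈ ΓA := by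
    intro w hw
    refine ⟨orthProj_mem hβc w, ?_⟩
    have : w ∈ ΓA ⊔ β := by
      refine Submodule.mem_sup.mpr ⟨orthProj ΓA w, orthProj_mem hΓAc w,
        w - orthProj ΓA w, ?_, by abel⟩
      rw [hβ]
      exact ⟨Submodule.sub_mem Γ hw (hΓAΓ (orthProj_mem hΓAc w)),
        sub_orthProj_mem_orth hΓAc w⟩
    obtain ⟨a, ha, b, hb, rfl⟩ := Submodule.mem_sup.mp this
    have : orthProj β (a + b) = b := by
      rw [map_add, orthProj_of_mem_orth hβc (hAorthβ ha), orthProj_of_mem hβc hb, zero_add]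
    rw [this]
    simpa using ha
  have hKsub : K ≤ ΓA ⊔ (L ⊔ C) := by
    intro k hk
    obtain ⟨h1, h2⟩ := hproj k (hKΓ hk)
    have hck : orthProj β k ∈ C := hC ▸ Submodule.mem_map.mpr ⟨k, hk, rfl⟩
    have : k = (k - orthProj β k) + orthProj β k := by abel
    rw [this]
    exact Submodule.add_mem _ (Submodule.mem_sup_left h2)
      (Submodule.mem_sup_right (Submodule.mem_sup_right hck))
  have hD : ΓA ⊔ (L ⊔ C) = (L ⊔ ΓA) ⊔ K := by
    apply le_antisymm
    · refine sup_le (le_trans ?_ le_sup_left) (sup_le (le_trans ?_ le_sup_left) ?_)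
      · exact le_sup_right
      · exact le_sup_left
      · -- C ≤ (L ⊔ ΓA) ⊔ K
        rw [hC]
        rintro c ⟨k, hk, rfl⟩
        obtain ⟨h1, h2⟩ := hproj k (hKΓ hk)
        have : orthProj β k = k - (k - orthProj β k) := by abel
        rw [ContinuousLinearMap.coe_coe, this]
        exact Submodule.sub_mem _ (Submodule.mem_sup_right hk)
          (Submodule.mem_sup_left (Submodule.mem_sup_right h2))
    · exact sup_le (sup_le (le_trans le_sup_left le_sup_right) le_sup_left) hKsub
  exact ⟨hproj, hD, sup_le hL hCβ, hAorthβ⟩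

end

section
include hΓcl hΓAcl hΓAΓ hβ hKΓ hC hL

theorem core_ker (h1 : FiniteDimensional ℂ ↥(ΓA ⊓ K)) (h2 : FiniteDimensional ℂ ↥(L ⊓ C)) :
    FiniteDimensional ℂ ↥((L ⊔ ΓA) ⊓ K) ∧
    Module.finrank ℂ ↥((L ⊔ ΓA) ⊓ K) = Module.finrank ℂ ↥(L ⊓ C) + Module.finrank ℂ ↥(ΓA ⊓ K) := by
  haveI := h1; haveI := h2
  obtain ⟨hproj, hD, hLCβ, hAorthβ⟩ := core_facts hΓcl hΓAcl hΓAΓ hβ hKΓ hC hL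
  have hβcl : IsClosed (β : Set W) := by
    rw [hβ]; exact hΓcl.inter ΓA.isClosed_orthogonal
  have hβc : IsComplete (β : Set W) := hβcl.isComplete
  have hLΓA : L ⊔ ΓA ≤ Γ := sup_le (le_trans hL (hβ ▸ inf_le_left)) hΓAΓ
  have hprojL : ∀ x ∈ L ⊔ ΓA, orthProj β x ∈ L := by
    intro x hx
    obtain ⟨l, hl, a, ha, rfl⟩ := Submodule.mem_sup.mp hx
    rw [orthProj_add_eq hβc (hL hl) (hAorthβ ha)]
    exact hl
  have hmem : ∀ x : ↥((L ⊔ ΓA) ⊓ K), orthProj β (x : W) ∈ L ⊓ C := by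
    intro x
    exact ⟨hprojL _ x.2.1, hC ▸ Submodule.mem_map.mpr ⟨(x : W), x.2.2, rfl⟩⟩
  set φ : ↥((L ⊔ ΓA) ⊓ K) →ₗ[ℂ] ↥(L ⊓ C) :=
    LinearMap.codRestrict (L ⊓ C) ((orthProj β).toLinearMap ∘ₗ ((L ⊔ ΓA) ⊓ K).subtype) hmem
    with hφ
  have hφval : ∀ x, (φ x : W) = orthProj β (x : W) := fun x => rfl
  have hsurj : Function.Surjective φ := by
    rintro ⟨c, hcL, hcC⟩
    obtain ⟨k, hk, rfl⟩ := hC ▸ hcC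
    have h2' := (hproj k (hKΓ hk)).2
    have hkmem : k ∈ (L ⊔ ΓA) ⊓ K := by
      refine ⟨?_, hk⟩
      have : k = orthProj β k + (k - orthProj β k) := by abel
      rw [this]
      exact Submodule.add_mem _ (Submodule.mem_sup_left hcL) (Submodule.mem_sup_right h2')
    exact ⟨⟨k, hkmem⟩, Subtype.ext (hφval _)⟩
  have hkerφ : LinearMap.ker φ = Submodule.comap ((L ⊔ ΓA) ⊓ K).subtype (ΓA ⊓ K) := by
    ext x
    rw [LinearMap.mem_ker, Submodule.mem_comap]
    constructor
    · intro hx0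
      have h0 : orthProj β (x : W) = 0 := by
        have := congrArg (Subtype.val) hx0
        rwa [hφval] at this
      have h2' := (hproj (x : W) (hLΓA x.2.1)).2
      rw [h0, sub_zero] at h2'
      exact ⟨h2', x.2.2⟩
    · intro hx
      apply Subtype.ext
      rw [hφval]
      exact orthProj_of_mem_orth hβc (hAorthβ hx.1)
  have equivKer : ↥(LinearMap.ker φ) ≃ₗ[ℂ] ↥(ΓA ⊓ K) := by
    rw [hkerφ]
    exact Submodule.comapSubtypeEquivOfLe (inf_le_inf le_sup_right le_rfl)
  haveI hfinker : FiniteDimensional ℂ ↥(LinearMap.ker φ) := equivKer.symm.finiteDimensional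
  haveI hfinrange : FiniteDimensional ℂ ↥(LinearMap.range φ) :=
    FiniteDimensional.finiteDimensional_submodule (LinearMap.range φ)
  haveI hfinquot : FiniteDimensional ℂ (↥((L ⊔ ΓA) ⊓ K) ⧸ LinearMap.ker φ) :=
    (φ.quotKerEquivRange).symm.finiteDimensional
  haveI hfinS : FiniteDimensional ℂ ↥((L ⊔ ΓA) ⊓ K) :=
    fd_of_submodule_quotient _ hfinker hfinquot
  have hrank := LinearMap.finrank_range_add_finrank_ker φ
  rw [LinearMap.range_eq_top.mpr hsurj, finrank_top] at hrank
  refine ⟨hfinS, ?_⟩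
  rw [← hrank, equivKer.finrank_eq]

theorem core_quotEquiv :
    Nonempty ((↥Γ ⧸ Submodule.comap Γ.subtype ((L ⊔ ΓA) ⊔ K)) ≃ₗ[ℂ]
      (↥β ⧸ Submodule.comap β.subtype (L ⊔ C))) := by
  obtain ⟨hproj, hD, hLCβ, hAorthβ⟩ := core_facts hΓcl hΓAcl hΓAΓ hβ hKΓ hC hL
  have hβcl : IsClosed (β : Set W) := by
    rw [hβ]; exact hΓcl.inter ΓA.isClosed_orthogonal
  have hβc : IsComplete (β : Set W) := hβcl.isComplete
  have hβΓ : β ≤ Γ := hβ ▸ inf_le_left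
  set τ : ↥Γ →ₗ[ℂ] ↥β :=
    LinearMap.codRestrict β ((orthProj β).toLinearMap ∘ₗ Γ.subtype)
      (fun x => (hproj (x : W) x.2).1) with hτ
  have hτval : ∀ x, (τ x : W) = orthProj β (x : W) := fun x => rfl
  set σ : ↥Γ →ₗ[ℂ] (↥β ⧸ Submodule.comap β.subtype (L ⊔ C)) :=
    (Submodule.comap β.subtype (L ⊔ C)).mkQ ∘ₗ τ with hσ
  have hσsurj : Function.Surjective σ := by
    intro q
    obtain ⟨b, rfl⟩ := Submodule.mkQ_surjective _ q
    refine ⟨⟨(b : W), hβΓ b.2⟩, ?_⟩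
    have : τ ⟨(b : W), hβΓ b.2⟩ = b := Subtype.ext ((hτval _).trans (orthProj_of_mem hβc b.2))
    simp only [hσ, LinearMap.coe_comp, Function.comp_apply, this]
  have hkerσ : LinearMap.ker σ = Submodule.comap Γ.subtype ((L ⊔ ΓA) ⊔ K) := by
    ext x
    rw [LinearMap.mem_ker, Submodule.mem_comap, ← hD]
    have : σ x = 0 ↔ orthProj β (x : W) ∈ L ⊔ C := by
      rw [hσ, LinearMap.coe_comp, Function.comp_apply, Submodule.mkQ_apply,
        Submodule.Quotient.mk_eq_zero, Submodule.mem_comap]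
      show ((τ x : W) ∈ L ⊔ C) ↔ _
      rw [hτval]
    rw [this]
    show _ ↔ (x : W) ∈ ΓA ⊔ (L ⊔ C)
    constructor
    · intro h
      have h2' := (hproj (x : W) x.2).2
      have : (x : W) = ((x : W) - orthProj β (x : W)) + orthProj β (x : W) := by abel
      rw [this]
      exact Submodule.add_mem _ (Submodule.mem_sup_left h2') (Submodule.mem_sup_right h)
    · intro h
      obtain ⟨a, ha, s, hs, hsum⟩ := Submodule.mem_sup.mp h
      have hsum' : a + s = (x : W) := hsum
      have : orthProj β (x : W) = s := by
        rw [← hsum', map_add, orthProj_of_mem_orth hβc (hAorthβ ha),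
          orthProj_of_mem hβc (hLCβ hs), zero_add]
      rw [this]
      exact hs
  exact ⟨(Submodule.quotEquivOfEq _ _ hkerσ.symm).trans (σ.quotKerEquivOfSurjective hσsurj)⟩

end
end Core

section GraphLemmas
variable {H : Type*} [NormedAddCommGroup H] [InnerProductSpace ℂ H]

local notation "E" => WithLp.linearEquiv 2 ℂ (H × H)

/-- auxiliary subspace `H × {0}` inside `WithLp 2 (H × H)`. -/
def auxH0 : Submodule ℂ (WithLp 2 (H × H)) :=
  (((⊤ : Submodule ℂ H).prod (⊥ : Submodule ℂ H)).map
    ((WithLp.linearEquiv 2 ℂ (H × H)).symm : (H × H) →ₗ[ℂ] WithLp 2 (H × H)))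

theorem mem_graphW {B : H →ₗ.[ℂ] H} {w : WithLp 2 (H × H)} :
    w ∈ graphW B ↔ (E) w ∈ B.graph := by
  rw [graphW, Submodule.mem_map_equiv, LinearEquiv.symm_symm]

theorem mem_auxH0 {w : WithLp 2 (H × H)} :
    w ∈ (auxH0 : Submodule ℂ (WithLp 2 (H×H))) ↔ ((E) w).2 = 0 := by
  rw [auxH0, Submodule.mem_map_equiv, LinearEquiv.symm_symm, Submodule.mem_prod]
  simp

theorem isClosed_mapSymm {G : Submodule ℂ (H × H)} (hG : IsClosed (G : Set (H × H))) :
    IsClosed ((G.map ((WithLp.linearEquiv 2 ℂ (H × H)).symm :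
        (H × H) →ₗ[ℂ] WithLp 2 (H × H)) : Submodule ℂ (WithLp 2 (H×H))) :
      Set (WithLp 2 (H × H))) := by
  have : (G.map ((WithLp.linearEquiv 2 ℂ (H × H)).symm : (H × H) →ₗ[ℂ] WithLp 2 (H × H)) :
      Set (WithLp 2 (H×H))) = (WithLp.prodContinuousLinearEquiv 2 ℂ H H) ⁻¹' (G : Set (H × H)) := by
    ext w
    simp [Submodule.mem_map_equiv]
    constructor
    · rintro ⟨a, b, h, rfl⟩
      exact h
    · intro h
      exact ⟨w.ofLp.1, w.ofLp.2, h, rfl⟩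
  rw [this]
  exact hG.preimage (WithLp.prodContinuousLinearEquiv 2 ℂ H H).continuous

/-- the map `ker B.toFun → W`, `x ↦ E.symm (x, 0)`. -/
noncomputable def kerToGraph (B : H →ₗ.[ℂ] H) :
    ↥(LinearMap.ker B.toFun) →ₗ[ℂ] WithLp 2 (H × H) :=
  ((E).symm : (H × H) →ₗ[ℂ] WithLp 2 (H × H)) ∘ₗ (LinearMap.inl ℂ H H) ∘ₗ
    B.domain.subtype ∘ₗ (LinearMap.ker B.toFun).subtype

@[simp] theorem kerToGraph_apply (B : H →ₗ.[ℂ] H) (x : ↥(LinearMap.ker B.toFun)) :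
    kerToGraph B x = (E).symm (((x : B.domain) : H), 0) := rfl

theorem kerToGraph_mem (B : H →ₗ.[ℂ] H) (x : ↥(LinearMap.ker B.toFun)) :
    kerToGraph B x ∈ graphW B ⊓ auxH0 := by
  refine Submodule.mem_inf.mpr ⟨?_, ?_⟩
  · rw [mem_graphW]
    simp only [kerToGraph_apply, LinearEquiv.apply_symm_apply]
    rw [LinearPMap.mem_graph_iff]
    exact ⟨x, rfl, x.2⟩
  · rw [mem_auxH0]
    simp

noncomputable def kerEquivGraph (B : H →ₗ.[ℂ] H) :
    ↥(LinearMap.ker B.toFun) ≃ₗ[ℂ] ↥(graphW B ⊓ auxH0) := by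
  refine LinearEquiv.ofBijective
    (LinearMap.codRestrict _ (kerToGraph B) (kerToGraph_mem B)) ⟨?_, ?_⟩
  · intro x y hxy
    have h1 : kerToGraph B x = kerToGraph B y := congrArg Subtype.val hxy
    simp only [kerToGraph_apply] at h1
    have := (E).symm.injective h1
    ext
    exact congrArg Prod.fst this
  · rintro ⟨w, hw⟩
    obtain ⟨hw1, hw2⟩ := Submodule.mem_inf.mp hw
    rw [mem_graphW, LinearPMap.mem_graph_iff] at hw1
    obtain ⟨y, hy1, hy2⟩ := hw1
    rw [mem_auxH0] at hw2
    have hyker : y ∈ LinearMap.ker B.toFun := by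
      rw [LinearMap.mem_ker]
      rw [hw2] at hy2
      exact hy2
    refine ⟨⟨y, hyker⟩, ?_⟩
    apply Subtype.ext
    show kerToGraph B _ = w
    rw [kerToGraph_apply]
    have : (((y : H), (0:H)) : H × H) = (E) w := by
      apply Prod.ext
      · exact hy1
      · exact hw2.symm
    rw [this]
    exact (E).symm_apply_apply w

theorem rangeW (B : H →ₗ.[ℂ] H) :
    LinearMap.range B.toFun = (graphW B).map
      ((LinearMap.snd ℂ H H) ∘ₗ ((E) : WithLp 2 (H × H) →ₗ[ℂ] H × H)) := by
  ext r
  simp only [LinearMap.mem_range, Submodule.mem_map, LinearMap.coe_comp, Function.comp_apply]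
  constructor
  · rintro ⟨y, rfl⟩
    refine ⟨(E).symm ((y : H), B.toFun y), ?_, ?_⟩
    · rw [mem_graphW, LinearEquiv.apply_symm_apply]
      exact B.mem_graph y
    · simp [LinearEquiv.apply_symm_apply]
  · rintro ⟨w, hw, rfl⟩
    rw [mem_graphW, LinearPMap.mem_graph_iff] at hw
    obtain ⟨y, hy1, hy2⟩ := hw
    exact ⟨y, hy2⟩

theorem graphW_realization (A A' : H →ₗ.[ℂ] H) (hle : A ≤ A')
    (L : Submodule ℂ (WithLp 2 (H × H))) (hL : L ≤ graphW A') :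
    graphW (realization A A' L) = L ⊔ graphW A := by
  have hsub : L ⊔ graphW A ≤ graphW A' :=
    sup_le hL (Submodule.map_mono (LinearPMap.le_graph_of_le hle))
  ext w
  rw [mem_graphW]
  constructor
  · intro hw
    rw [LinearPMap.mem_graph_iff] at hw
    obtain ⟨y, hy1, hy2⟩ := hw
    have hyS : (y : H) ∈ realizationDom A L := y.2.1
    obtain ⟨w', hw', hww'⟩ := Submodule.mem_map.mp hyS
    have hw'Γ : (E) w' ∈ A'.graph := mem_graphW.mp (hsub hw')
    rw [LinearPMap.mem_graph_iff] at hw'Γ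
    obtain ⟨z, hz1, hz2⟩ := hw'Γ
    have hyz : (y : H) = (z : H) := by rw [← hww', hz1]; rfl
    have hval : realization A A' L y = A' z := LinearPMap.domRestrict_apply hyz
    have : (E) w = (E) w' := by
      apply Prod.ext
      · rw [← hy1, hyz]; exact hz1
      · rw [← hy2, hval, hz2]
    rwa [(E).injective this]
  · intro hw
    have hwΓ : (E) w ∈ A'.graph := mem_graphW.mp (hsub hw)
    rw [LinearPMap.mem_graph_iff] at hwΓ
    obtain ⟨z, hz1, hz2⟩ := hwΓ
    have hfst : ((E) w).1 ∈ realizationDom A L := Submodule.mem_map.mpr ⟨w, hw, rfl⟩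
    have hdom : ((E) w).1 ∈ realizationDom A L ⊓ A'.domain :=
      ⟨hfst, by rw [← hz1]; exact z.2⟩
    rw [LinearPMap.mem_graph_iff]
    refine ⟨⟨((E) w).1, hdom⟩, rfl, ?_⟩
    have hval : realization A A' L ⟨((E) w).1, hdom⟩ = A' z :=
      LinearPMap.domRestrict_apply hz1.symm
    rw [hval, hz2]

end GraphLemmas

open Module in
/-- for a Fredholm extension pair `(A, A')` and a closed boundary condition
`L ⊆ β` such that `(L, C)` is a Fredholm pair in `β`, the realization `A_L` is a Fredholm
operator and `ind A_L = ind_β(L, C) + dim ker A − dim(H / ran A')` in `ℤ`. -/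
theorem statement_18
    {H : Type*} [NormedAddCommGroup H] [InnerProductSpace ℂ H] [CompleteSpace H]
    (A A' : H →ₗ.[ℂ] H)
    (hAgraph : IsClosed ((A.graph : Submodule ℂ (H × H)) : Set (H × H)))
    (hAdense : Dense ((A.domain : Submodule ℂ H) : Set H))
    (hA'graph : IsClosed ((A'.graph : Submodule ℂ (H × H)) : Set (H × H)))
    (hA'dense : Dense ((A'.domain : Submodule ℂ H) : Set H))
    (hle : A ≤ A')
    (hFred : LowerSemiFredholmOp A ∧ UpperSemiFredholmOp A')
    (L : Submodule ℂ (WithLp 2 (H × H)))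
    (hLcl : IsClosed ((L : Submodule ℂ (WithLp 2 (H × H))) : Set (WithLp 2 (H × H))))
    (hLβ : L ≤ bdryW A A')
    (hLC : FredholmPairIn (bdryW A A') L (cauchyW A A')) :
    FredholmOp (realization A A' L) ∧
    (finrank ℂ (LinearMap.ker (realization A A' L).toFun) : ℤ) -
        (finrank ℂ (H ⧸ LinearMap.range (realization A A' L).toFun) : ℤ) =
      ((finrank ℂ ↥(L ⊓ cauchyW A A') : ℤ) -
        (finrank ℂ (↥(bdryW A A') ⧸
          Submodule.comap (bdryW A A').subtype (L ⊔ cauchyW A A')) : ℤ)) +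
      (finrank ℂ (LinearMap.ker A.toFun) : ℤ) -
      (finrank ℂ (H ⧸ LinearMap.range A'.toFun) : ℤ) := by
  classical
  obtain ⟨⟨hAran, hAker⟩, hA'ran, hA'coker⟩ := hFred
  obtain ⟨hLCcl, hLCfin1, hLCfin2⟩ := hLC
  have hΓcl : IsClosed ((graphW A' : Submodule ℂ (WithLp 2 (H × H))) :
      Set (WithLp 2 (H × H))) := isClosed_mapSymm hA'graph
  have hΓAcl : IsClosed ((graphW A : Submodule ℂ (WithLp 2 (H × H))) :
      Set (WithLp 2 (H × H))) := isClosed_mapSymm hAgraph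
  have hΓAΓ : graphW A ≤ graphW A' := Submodule.map_mono (LinearPMap.le_graph_of_le hle)
  have hβdef : bdryW A A' = graphW A' ⊓ (graphW A)ᗮ := rfl
  have hKdef : kerW A' = graphW A' ⊓ auxH0 := rfl
  have hKΓ : kerW A' ≤ graphW A' := inf_le_left
  have hCdef : cauchyW A A' = (kerW A').map ((orthProj (bdryW A A')) : WithLp 2 (H × H) →ₗ[ℂ] WithLp 2 (H × H)) := rfl
  have hLΓ : L ≤ graphW A' := le_trans hLβ inf_le_left
  have hsub : L ⊔ graphW A ≤ graphW A' := sup_le hLΓ hΓAΓ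
  have hgraphReal : graphW (realization A A' L) = L ⊔ graphW A :=
    graphW_realization A A' hle L hLΓ
  -- kernel side
  have hinter : (L ⊔ graphW A) ⊓ auxH0 = (L ⊔ graphW A) ⊓ kerW A' := by
    ext x
    simp only [Submodule.mem_inf, hKdef]
    exact ⟨fun ⟨h1, h2⟩ => ⟨h1, hsub h1, h2⟩, fun ⟨h1, h2, h3⟩ => ⟨h1, h3⟩⟩
  have hinterA : graphW A ⊓ auxH0 = graphW A ⊓ kerW A' := by
    ext x
    simp only [Submodule.mem_inf, hKdef]
    exact ⟨fun ⟨h1, h2⟩ => ⟨h1, hΓAΓ h1, h2⟩, fun ⟨h1, h2, h3⟩ => ⟨h1, h3⟩⟩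
  have e1 : ↥(LinearMap.ker (realization A A' L).toFun) ≃ₗ[ℂ]
      ↥((L ⊔ graphW A) ⊓ kerW A') := by
    have h := kerEquivGraph (realization A A' L)
    rwa [hgraphReal, hinter] at h
  have e2 : ↥(LinearMap.ker A.toFun) ≃ₗ[ℂ] ↥(graphW A ⊓ kerW A') := by
    have h := kerEquivGraph A
    rwa [hinterA] at h
  haveI hfinkerA : FiniteDimensional ℂ ↥(graphW A ⊓ kerW A') := by
    haveI := hAker
    exact e2.finiteDimensional
  obtain ⟨hfinS, hrankS⟩ := core_ker hΓcl hΓAcl hΓAΓ hβdef hKΓ hCdef hLβ hfinkerA hLCfin1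
  haveI hfinkerReal : FiniteDimensional ℂ ↥(LinearMap.ker (realization A A' L).toFun) :=
    e1.symm.finiteDimensional
  have hker : finrank ℂ ↥(LinearMap.ker (realization A A' L).toFun)
      = finrank ℂ ↥(L ⊓ cauchyW A A') + finrank ℂ ↥(LinearMap.ker A.toFun) := by
    rw [e1.finrank_eq, hrankS, e2.finrank_eq]
  -- range / cokernel side
  set π : WithLp 2 (H × H) →ₗ[ℂ] H := (LinearMap.snd ℂ H H) ∘ₗ
    ((WithLp.linearEquiv 2 ℂ (H × H)) : WithLp 2 (H × H) →ₗ[ℂ] H × H) with hπ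
  have hπ0 : ∀ w ∈ (kerW A' : Submodule ℂ (WithLp 2 (H × H))), π w = 0 := by
    intro w hw
    exact mem_auxH0.mp (hKdef ▸ hw).2
  have hRmap : LinearMap.range (realization A A' L).toFun = (L ⊔ graphW A).map π := by
    rw [rangeW, hgraphReal]
  have hR'map : LinearMap.range A'.toFun = (graphW A').map π := rangeW A'
  set R := LinearMap.range (realization A A' L).toFun with hR
  set R' := LinearMap.range A'.toFun with hR'
  have hRR' : R ≤ R' := by
    rw [hRmap, hR'map]
    exact Submodule.map_mono hsub
  have hsndR : ∀ w ∈ (graphW A' : Submodule ℂ (WithLp 2 (H × H))),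
      (π w ∈ R ↔ w ∈ (L ⊔ graphW A) ⊔ kerW A') := by
    intro w hw
    constructor
    · intro hπw
      rw [hRmap] at hπw
      obtain ⟨u, hu, huw⟩ := Submodule.mem_map.mp hπw
      have hwu : w - u ∈ kerW A' := by
        rw [hKdef]
        refine ⟨Submodule.sub_mem _ hw (hsub hu), mem_auxH0.mpr ?_⟩
        have : π (w - u) = 0 := by rw [map_sub, huw, sub_self]
        exact this
      have : w = u + (w - u) := by abel
      rw [this]
      exact Submodule.add_mem _ (Submodule.mem_sup_left hu) (Submodule.mem_sup_right hwu)
    · intro hmem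
      obtain ⟨u, hu, k, hk, hsum⟩ := Submodule.mem_sup.mp hmem
      have : π w = π u := by rw [← hsum, map_add, hπ0 k hk, add_zero]
      rw [this, hRmap]
      exact Submodule.mem_map.mpr ⟨u, hu, rfl⟩
  set ρ : ↥(graphW A' : Submodule ℂ (WithLp 2 (H × H))) →ₗ[ℂ] (H ⧸ R) :=
    R.mkQ ∘ₗ π ∘ₗ (graphW A').subtype with hρ
  have hkerρ : LinearMap.ker ρ =
      Submodule.comap (graphW A').subtype ((L ⊔ graphW A) ⊔ kerW A') := by
    ext x
    rw [LinearMap.mem_ker, Submodule.mem_comap, hρ]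
    simp only [LinearMap.coe_comp, Function.comp_apply, Submodule.mkQ_apply,
      Submodule.Quotient.mk_eq_zero]
    exact hsndR (x : WithLp 2 (H × H)) x.2
  have hrangeρ : LinearMap.range ρ = R'.map R.mkQ := by
    ext q
    constructor
    · rintro ⟨x, rfl⟩
      refine Submodule.mem_map.mpr ⟨π (x : WithLp 2 (H × H)), ?_, rfl⟩
      rw [hR'map]
      exact Submodule.mem_map.mpr ⟨(x : WithLp 2 (H × H)), x.2, rfl⟩
    · rintro ⟨r, hr, rfl⟩
      rw [hR'map] at hr
      obtain ⟨w, hw, rfl⟩ := Submodule.mem_map.mp hr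
      exact ⟨⟨w, hw⟩, rfl⟩
  obtain ⟨e4⟩ := core_quotEquiv hΓcl hΓAcl hΓAΓ hβdef hKΓ hCdef hLβ
  have e3 : (↥(graphW A' : Submodule ℂ (WithLp 2 (H × H))) ⧸ LinearMap.ker ρ) ≃ₗ[ℂ]
      ↥(R'.map R.mkQ) := by
    have h := ρ.quotKerEquivRange
    rwa [hrangeρ] at h
  have e5 : ↥(R'.map R.mkQ) ≃ₗ[ℂ]
      (↥(bdryW A A') ⧸ Submodule.comap (bdryW A A').subtype (L ⊔ cauchyW A A')) :=
    e3.symm.trans ((Submodule.quotEquivOfEq _ _ hkerρ).trans e4)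
  have eq1 : ((H ⧸ R) ⧸ (R'.map R.mkQ)) ≃ₗ[ℂ] (H ⧸ R') :=
    Submodule.quotientQuotientEquivQuotient R R' hRR'
  haveI hfinq : FiniteDimensional ℂ
      (↥(bdryW A A') ⧸ Submodule.comap (bdryW A A').subtype (L ⊔ cauchyW A A')) := hLCfin2
  haveI hfin5 : FiniteDimensional ℂ ↥(R'.map R.mkQ) := e5.symm.finiteDimensional
  haveI hfin6 : FiniteDimensional ℂ ((H ⧸ R) ⧸ (R'.map R.mkQ)) := by
    haveI := hA'coker
    exact eq1.symm.finiteDimensional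
  haveI hfinHR : FiniteDimensional ℂ (H ⧸ R) :=
    fd_of_submodule_quotient (R'.map R.mkQ) hfin5 hfin6
  have hcoker : finrank ℂ (H ⧸ R) =
      finrank ℂ (↥(bdryW A A') ⧸ Submodule.comap (bdryW A A').subtype (L ⊔ cauchyW A A'))
        + finrank ℂ (H ⧸ R') := by
    have h := Submodule.finrank_quotient_add_finrank (R'.map R.mkQ)
    rw [eq1.finrank_eq, e5.finrank_eq] at h
    omega
  -- closedness of the range
  have hRcl : IsClosed ((R : Submodule ℂ H) : Set H) := by
    haveI : CompleteSpace ↥(graphW A' : Submodule ℂ (WithLp 2 (H × H))) :=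
      hΓcl.completeSpace_coe
    haveI : CompleteSpace ↥R' := hA'ran.completeSpace_coe
    set πc : WithLp 2 (H × H) →L[ℂ] H := (ContinuousLinearMap.snd ℂ H H).comp
      (WithLp.prodContinuousLinearEquiv 2 ℂ H H : WithLp 2 (H × H) →L[ℂ] H × H) with hπc
    have hπceq : ∀ w, πc w = π w := fun w => rfl
    have hmem' : ∀ x : ↥(graphW A' : Submodule ℂ (WithLp 2 (H × H))),
        πc.comp (graphW A').subtypeL x ∈ R' := by
      intro x
      rw [hR'map]
      exact Submodule.mem_map.mpr ⟨(x : WithLp 2 (H × H)), x.2, rfl⟩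
    set qhat : ↥(graphW A' : Submodule ℂ (WithLp 2 (H × H))) →L[ℂ] ↥R' :=
      (πc.comp (graphW A').subtypeL).codRestrict R' hmem' with hqhat
    have hqsurj : Function.Surjective qhat := by
      rintro ⟨r, hr⟩
      rw [hR'map] at hr
      obtain ⟨w, hw, rfl⟩ := Submodule.mem_map.mp hr
      exact ⟨⟨w, hw⟩, rfl⟩
    obtain ⟨hproj', hDeq, hLCβ', hAorthβ'⟩ :=
      core_facts hΓcl hΓAcl hΓAΓ hβdef hKΓ hCdef hLβ
    have hLCorth : L ⊔ cauchyW A A' ≤ (graphW A)ᗮ :=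
      le_trans hLCβ' (hβdef ▸ inf_le_right)
    have hDcl : IsClosed ((graphW A ⊔ (L ⊔ cauchyW A A') :
        Submodule ℂ (WithLp 2 (H × H))) : Set (WithLp 2 (H × H))) :=
      isClosed_sup_orth hΓAcl hLCcl hLCorth
    have hD'cl : IsClosed (((L ⊔ graphW A) ⊔ kerW A' :
        Submodule ℂ (WithLp 2 (H × H))) : Set (WithLp 2 (H × H))) := by
      rw [← hDeq]
      exact hDcl
    have hpre : qhat ⁻¹' ((Submodule.comap R'.subtype R : Submodule ℂ ↥R') : Set ↥R') =
        ((Submodule.comap (graphW A').subtype ((L ⊔ graphW A) ⊔ kerW A') :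
          Submodule ℂ ↥(graphW A' : Submodule ℂ (WithLp 2 (H × H)))) :
            Set ↥(graphW A' : Submodule ℂ (WithLp 2 (H × H)))) := by
      ext x
      simp only [Set.mem_preimage, SetLike.mem_coe, Submodule.mem_comap]
      exact hsndR (x : WithLp 2 (H × H)) x.2
    have hpreclosed : IsClosed ((Submodule.comap (graphW A').subtype
        ((L ⊔ graphW A) ⊔ kerW A') : Submodule ℂ
          ↥(graphW A' : Submodule ℂ (WithLp 2 (H × H)))) :
            Set ↥(graphW A' : Submodule ℂ (WithLp 2 (H × H)))) := by
      have : ((Submodule.comap (graphW A').subtype ((L ⊔ graphW A) ⊔ kerW A') :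
          Submodule ℂ ↥(graphW A' : Submodule ℂ (WithLp 2 (H × H)))) :
            Set ↥(graphW A' : Submodule ℂ (WithLp 2 (H × H)))) =
          Subtype.val ⁻¹' (((L ⊔ graphW A) ⊔ kerW A' : Submodule ℂ (WithLp 2 (H × H))) :
            Set (WithLp 2 (H × H))) := rfl
      rw [this]
      exact hD'cl.preimage continuous_subtype_val
    have hopen : IsOpenMap qhat := ContinuousLinearMap.isOpenMap qhat hqsurj
    have hFclosed : IsClosed ((Submodule.comap R'.subtype R : Submodule ℂ ↥R') : Set ↥R') := by
      rw [← isOpen_compl_iff]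
      have himg : qhat '' (qhat ⁻¹' (((Submodule.comap R'.subtype R : Submodule ℂ ↥R') :
          Set ↥R')ᶜ)) = ((Submodule.comap R'.subtype R : Submodule ℂ ↥R') : Set ↥R')ᶜ :=
        Set.image_preimage_eq _ hqsurj
      rw [← himg]
      apply hopen
      rw [Set.preimage_compl, hpre]
      exact hpreclosed.isOpen_compl
    have hRset : ((R : Submodule ℂ H) : Set H) =
        Subtype.val '' ((Submodule.comap R'.subtype R : Submodule ℂ ↥R') : Set ↥R') := by
      have hmc : Submodule.map R'.subtype (Submodule.comap R'.subtype R) = R := by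
        rw [Submodule.map_comap_subtype, inf_eq_right.mpr hRR']
      conv_lhs => rw [← hmc]
      rfl
    rw [hRset]
    exact hA'ran.isClosedEmbedding_subtypeVal.isClosedMap _ hFclosed
  refine ⟨⟨hRcl, hfinkerReal, hfinHR⟩, ?_⟩
  rw [hker, hcoker]
  push_cast
  ring
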